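/- For every n ≥ 2 and every word w in the set Dₙ (the n rigid words appearing in the identity scheme Dₙ), the factor monoid M(w) satisfies the identities (0) and (Cₙ): x⁴ ≈ x³, x³t ≈ tx³, and x^{2n} t₁⋯t_{2n} ≈ (t₁x)⋯(t_{2n}x). -/

import Mathlib

abbrev Word := List ℕ

def subst (φ : ℕ → Word) (w : Word) : Word := w.flatMap φ

inductive Deduce (S : Set (Word × Word)) : Word → Word → Prop
  | refl (w : Word) : Deduce S w w
  | symm {u v : Word} : Deduce S u v → Deduce S v u
  | trans {u v w : Word} : Deduce S u v → Deduce S v w → Deduce S u w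
  | step (a b : Word) (φ : ℕ → Word) {s t : Word} (h : (s, t) ∈ S) :
      Deduce S (a ++ subst φ s ++ b) (a ++ subst φ t ++ b)

def FM (w : Word) : Type := Option {u : Word // u <:+: w}

def fmul {w : Word} : FM w → FM w → FM w
  | some u, some v =>
      if h : (u.1 ++ v.1) <:+: w then some ⟨u.1 ++ v.1, h⟩ else none
  | _, _ => none

def fone (w : Word) : FM w := some ⟨[], List.nil_infix⟩

theorem fmul_none_left {w : Word} (a : FM w) : fmul none a = none := rfl

theorem fmul_none_right {w : Word} (a : FM w) : fmul a none = none := by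
  rcases a with _ | u <;> rfl

theorem fmul_some {w : Word} (u v : {u : Word // u <:+: w}) :
    fmul (some u) (some v) =
      if h : (u.1 ++ v.1) <:+: w then some ⟨u.1 ++ v.1, h⟩ else none := rfl

theorem fmul_assoc {w : Word} (a b c : FM w) : fmul (fmul a b) c = fmul a (fmul b c) := by
  rcases a with _ | u
  · rfl
  rcases b with _ | v
  · rfl
  rcases c with _ | t
  · rw [fmul_some]; split <;> rfl
  rw [fmul_some, fmul_some]
  by_cases h : (u.1 ++ v.1 ++ t.1) <:+: w
  · have h1 : (u.1 ++ v.1) <:+: w := List.IsInfix.trans ⟨[], t.1, by simp⟩ h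
    have h2 : (v.1 ++ t.1) <:+: w := List.IsInfix.trans ⟨u.1, [], by simp⟩ h
    rw [dif_pos h1, fmul_some, dif_pos h2, fmul_some, dif_pos h,
      dif_pos (show (u.1 ++ (v.1 ++ t.1)) <:+: w by simpa [List.append_assoc] using h)]
    simp [List.append_assoc]
    rfl
  · by_cases h1 : (u.1 ++ v.1) <:+: w
    · rw [dif_pos h1, fmul_some, dif_neg h]
      by_cases h2 : (v.1 ++ t.1) <:+: w
      · rw [dif_pos h2, fmul_some,
          dif_neg (fun hh => h (by simpa [List.append_assoc] using hh))]
      · rw [dif_neg h2]; rfl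
    · rw [dif_neg h1]; change none = _
      by_cases h2 : (v.1 ++ t.1) <:+: w
      · rw [dif_pos h2, fmul_some,
          dif_neg (fun hh => h1 (List.IsInfix.trans ⟨[], t.1, by simp⟩ hh))]
      · rw [dif_neg h2]; rfl

instance (w : Word) : Monoid (FM w) where
  mul := fmul
  one := fone w
  mul_assoc := fmul_assoc
  one_mul := by
    rintro (_ | u)
    · rfl
    · show fmul (fone w) (some u) = some u
      rw [fone, fmul_some, dif_pos (by simpa using u.2)]
      simp
      rfl
  mul_one := by
    rintro (_ | u)
    · rfl
    · show fmul (some u) (fone w) = some u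
      rw [fone, fmul_some, dif_pos (by simpa using u.2)]
      simp
      rfl

def SatId (M : Type) [Monoid M] (p : Word × Word) : Prop :=
  ∀ φ : ℕ → M, (p.1.map φ).prod = (p.2.map φ).prod

def VSat (E : Set (Word × Word)) (p : Word × Word) : Prop :=
  ∀ (M : Type) [Monoid M], (∀ q ∈ E, SatId M q) → SatId M p

def ids0 : Set (Word × Word) :=
  {([0,1,2,0,3,1],[1,0,2,0,3,1]), ([0,2,0,1,3,1],[0,2,1,0,3,1]), ([0,2,1,3,0,1],[0,2,1,3,1,0])}

def idA (n : ℕ) : Word × Word :=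
  (List.replicate n 0 ++ (List.range n).map (· + 1),
   ((List.range n).map (fun i => [i + 1, 0])).flatten)

def rigid (e₀ : ℕ) (es : List ℕ) : Word :=
  List.replicate e₀ 0 ++ (es.zipIdx.map (fun p => (p.2 + 1) :: List.replicate p.1 0)).flatten

def Bword (n i : ℕ) : Word := List.replicate i 0 ++ 1 :: List.replicate (n - 1 - i) 0

def wmr (m r : ℕ) : Word := rigid (m - 1) (List.replicate r (m - 1))

/-- The `j`-th word of `Dₙ`: the rigid word with `n` blocks of `x`'s, the `j`-th
exponent equal to `1` and all other exponents equal to `2`. -/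
def Dword (n j : ℕ) : Word :=
  rigid (if j = 0 then 1 else 2)
    ((List.range (n - 1)).map (fun i => if i + 1 = j then 1 else 2))

/-! `u ↦ (u if u is a factor of w, else 0)` is a monoid morphism from the free monoid onto `M(w)`,
so an identity holds in `M(w)` once every substitution makes its two sides either equal or both
non-factors of `w`. In a word of `Dₙ` (with `x` the letter `0`) each `tᵢ` occurs once, `x³` is not a
factor and `x` occurs `2n - 1` times. So both sides are non-factors as soon as a variable occurring
twice on each side takes a value containing some `tᵢ`, or a variable occurring in a cube or `2n`
times on each side takes a nonempty value; in the remaining substitutions the two sides coincide. -/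

namespace FM

variable {w : Word}

-- The ascription keeps the `dite` at type `Option _`, where `dif_pos`/`dif_neg` can rewrite it.
def ofWord (w u : Word) : FM w :=
  (if h : u <:+: w then some ⟨u, h⟩ else none : Option {v : Word // v <:+: w})

theorem ofWord_of_infix {u : Word} (h : u <:+: w) : ofWord w u = some ⟨u, h⟩ := dif_pos h

theorem ofWord_of_not_infix {u : Word} (h : ¬ u <:+: w) : ofWord w u = none := dif_neg h

theorem ofWord_nil : ofWord w [] = 1 := ofWord_of_infix List.nil_infix

theorem ofWord_append (u v : Word) : ofWord w (u ++ v) = ofWord w u * ofWord w v := by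
  show _ = fmul _ _
  by_cases h : u ++ v <:+: w
  · have hu : u <:+: w := List.infix_append_left.trans h
    have hv : v <:+: w := (List.suffix_append u v).isInfix.trans h
    rw [ofWord_of_infix h, ofWord_of_infix hu, ofWord_of_infix hv, fmul_some, dif_pos h]
  · rw [ofWord_of_not_infix h]
    by_cases hu : u <:+: w
    · by_cases hv : v <:+: w
      · rw [ofWord_of_infix hu, ofWord_of_infix hv, fmul_some, dif_neg h]
      · rw [ofWord_of_not_infix hv, fmul_none_right]
    · rw [ofWord_of_not_infix hu, fmul_none_left]

theorem ofWord_flatten (ls : List Word) : ofWord w ls.flatten = (ls.map (ofWord w)).prod := by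
  induction ls with
  | nil => exact ofWord_nil
  | cons u ls ih => rw [List.flatten_cons, ofWord_append, ih, List.map_cons, List.prod_cons]

theorem ofWord_surjective : Function.Surjective (ofWord w) := by
  rintro (_ | ⟨u, hu⟩)
  · refine ⟨0 :: w, ofWord_of_not_infix fun h => ?_⟩
    simpa using h.length_le
  · exact ⟨u, ofWord_of_infix hu⟩

theorem ofWord_eq_of_not_infix {u v : Word} (hu : ¬ u <:+: w) (hv : ¬ v <:+: w) :
    ofWord w u = ofWord w v := by
  rw [ofWord_of_not_infix hu, ofWord_of_not_infix hv]

theorem satId_of_forall_subst {l r : Word}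
    (h : ∀ ψ : ℕ → Word, ofWord w (subst ψ l) = ofWord w (subst ψ r)) :
    SatId (FM w) (l, r) := by
  intro φ
  obtain ⟨ψ, rfl⟩ : ∃ ψ : ℕ → Word, ofWord w ∘ ψ = φ :=
    ⟨_, funext fun a => Function.surjInv_eq ofWord_surjective (φ a)⟩
  simpa only [subst, List.flatMap, ofWord_flatten, List.map_map] using h ψ

end FM

open List

theorem count_mul_le_count_subst (ψ : ℕ → Word) (l : Word) (a c : ℕ) :
    l.count a * (ψ a).count c ≤ (subst ψ l).count c := by
  induction l with
  | nil => simp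
  | cons b l ih =>
    simp only [subst, flatMap_cons, count_append, count_cons, beq_iff_eq] at ih ⊢
    by_cases h : b = a
    · subst h; rw [if_pos rfl, Nat.succ_mul]; omega
    · rw [if_neg h, Nat.add_zero]; omega

theorem not_infix_of_count_lt {w z : Word} {c : ℕ} (h : w.count c < z.count c) : ¬ z <:+: w :=
  fun hz => by have := hz.count_le c; omega

section LetterConditions

variable {w : Word}

theorem cube_not_infix (hlinear : ∀ c, c ≠ 0 → w.count c ≤ 1) (hcube : ¬ [0,0,0] <:+: w)
    {u : Word} (hu : u ≠ []) : ¬ u ++ u ++ u <:+: w := by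
  by_cases hzero : ∀ a ∈ u, a = 0
  · obtain ⟨k, rfl⟩ : ∃ k, u = replicate (k + 1) 0 := by
      refine ⟨u.length - 1, ?_⟩
      rw [Nat.sub_add_cancel (length_pos_iff.mpr hu)]
      exact eq_replicate_length.mpr hzero
    refine fun h => hcube (IsInfix.trans ?_ h)
    rw [replicate_append_replicate, replicate_append_replicate,
      show k + 1 + (k + 1) + (k + 1) = 3 + 3 * k by ring, ← replicate_append_replicate]
    exact (prefix_append _ _).isInfix
  · push Not at hzero
    obtain ⟨c, hcu, hc⟩ := hzero
    have := hlinear c hc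
    have := count_pos_iff.mpr hcu
    exact not_infix_of_count_lt (c := c) (by simp only [count_append]; omega)

theorem satId_of_commute_zero_powers (hlinear : ∀ c, c ≠ 0 → w.count c ≤ 1) {l r : Word}
    (hl : ∀ a < 2, 2 ≤ l.count a) (hr : ∀ a < 2, 2 ≤ r.count a)
    (heq : ∀ ψ : ℕ → Word, (∀ a < 2, ∀ b ∈ ψ a, b = 0) → subst ψ l = subst ψ r) :
    SatId (FM w) (l, r) := by
  refine FM.satId_of_forall_subst fun ψ => ?_
  by_cases hzero : ∀ a < 2, ∀ b ∈ ψ a, b = 0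
  · rw [heq ψ hzero]
  · push Not at hzero
    obtain ⟨a, ha, c, hca, hc⟩ := hzero
    have := hlinear c hc
    have hpos := count_pos_iff.mpr hca
    have := count_mul_le_count_subst ψ l a c
    have := count_mul_le_count_subst ψ r a c
    have := Nat.mul_le_mul (hl a ha) hpos
    have := Nat.mul_le_mul (hr a ha) hpos
    exact FM.ofWord_eq_of_not_infix (not_infix_of_count_lt (c := c) (by omega))
      (not_infix_of_count_lt (c := c) (by omega))

theorem satId_ids0 (hlinear : ∀ c, c ≠ 0 → w.count c ≤ 1) : ∀ p ∈ ids0, SatId (FM w) p := by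
  rintro p (rfl | rfl | rfl) <;>
  refine satId_of_commute_zero_powers hlinear (by decide) (by decide) fun ψ hzero => ?_ <;>
  obtain ⟨k, hk⟩ : ∃ k, ψ 0 = replicate k 0 := ⟨_, eq_replicate_length.mpr (hzero 0 two_pos)⟩ <;>
  obtain ⟨l, hl⟩ : ∃ l, ψ 1 = replicate l 0 := ⟨_, eq_replicate_length.mpr (hzero 1 one_lt_two)⟩ <;>
  simp [subst, hk, hl, ← append_assoc, replicate_append_replicate, Nat.add_comm]

theorem satId_of_cube_infix (hlinear : ∀ c, c ≠ 0 → w.count c ≤ 1) (hcube : ¬ [0,0,0] <:+: w)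
    {l r : Word} (hl : [0,0,0] <:+: l) (hr : [0,0,0] <:+: r)
    (heq : ∀ ψ : ℕ → Word, ψ 0 = [] → subst ψ l = subst ψ r) :
    SatId (FM w) (l, r) := by
  refine FM.satId_of_forall_subst fun ψ => ?_
  by_cases h0 : ψ 0 = []
  · rw [heq ψ h0]
  · have hcube' := cube_not_infix hlinear hcube h0
    have hsubst : subst ψ [0,0,0] = ψ 0 ++ ψ 0 ++ ψ 0 := by simp [subst]
    exact FM.ofWord_eq_of_not_infix (fun h => hcube' (hsubst ▸ (hl.flatMap ψ).trans h))
      (fun h => hcube' (hsubst ▸ (hr.flatMap ψ).trans h))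

theorem satId_of_count_zero_ge {m : ℕ} (hlt : ∀ c, w.count c < m) {l r : Word}
    (hl : m ≤ l.count 0) (hr : m ≤ r.count 0)
    (heq : ∀ ψ : ℕ → Word, ψ 0 = [] → subst ψ l = subst ψ r) :
    SatId (FM w) (l, r) := by
  refine FM.satId_of_forall_subst fun ψ => ?_
  by_cases h0 : ψ 0 = []
  · rw [heq ψ h0]
  · obtain ⟨c, hc⟩ := exists_mem_of_ne_nil _ h0
    have hpos := count_pos_iff.mpr hc
    have := hlt c
    have := count_mul_le_count_subst ψ l 0 c
    have := count_mul_le_count_subst ψ r 0 c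
    have := Nat.mul_le_mul hl hpos
    have := Nat.mul_le_mul hr hpos
    exact FM.ofWord_eq_of_not_infix (not_infix_of_count_lt (c := c) (by omega))
      (not_infix_of_count_lt (c := c) (by omega))

theorem satId_idA {m : ℕ} (hlt : ∀ c, w.count c < m) : SatId (FM w) (idA m) :=
  satId_of_count_zero_ge hlt
    (by simp) (by simp [count_flatten, Function.comp_def])
    fun ψ h0 => by simp [subst, h0, flatMap_map, ← flatMap_def, flatMap_assoc]

end LetterConditions

theorem filter_rigid (e₀ : ℕ) (es : List ℕ) :
    (rigid e₀ es).filter (· != 0) = (range es.length).map (· + 1) := by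
  simp only [rigid, filter_append, filter_flatten, map_map, Function.comp_def]
  simp [← flatMap_def, ← map_eq_flatMap, range_eq_range', ← zipIdx_map_snd]

theorem count_rigid_le_one {c : ℕ} (hc : c ≠ 0) (e₀ : ℕ) (es : List ℕ) :
    (rigid e₀ es).count c ≤ 1 := by
  rw [← count_filter (p := (· != 0)) (by simpa using hc), filter_rigid]
  exact nodup_iff_count_le_one.mp (nodup_range.map (add_left_injective 1)) c

theorem count_zero_rigid (e₀ : ℕ) (es : List ℕ) : (rigid e₀ es).count 0 = e₀ + es.sum := by
  simp [rigid, count_flatten, Function.comp_def]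

theorem not_triple_infix_replicate_append {e c : ℕ} {l : Word} (he : e ≤ 2) (hc : c ≠ 0)
    (h : ¬ [0,0,0] <:+: l) : ¬ [0,0,0] <:+: replicate e 0 ++ c :: l := by
  interval_cases e <;> simp [infix_cons_iff, h, Ne.symm hc]

theorem not_triple_infix_replicate_append_blocks {e₀ : ℕ} (h₀ : e₀ ≤ 2) {ps : List (ℕ × ℕ)}
    (hps : ∀ p ∈ ps, p.1 ≤ 2) :
    ¬ [0,0,0] <:+: replicate e₀ 0 ++ (ps.map fun p => (p.2 + 1) :: replicate p.1 0).flatten := by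
  induction ps generalizing e₀ with
  | nil =>
    intro h
    have := h.length_le
    simp only [map_nil, flatten_nil, append_nil, length_replicate, length_cons] at this
    omega
  | cons p ps ih =>
    rw [map_cons, flatten_cons, cons_append]
    exact not_triple_infix_replicate_append h₀ p.2.succ_ne_zero
      (ih (hps p mem_cons_self) fun q hq => hps q (mem_cons_of_mem p hq))

theorem not_triple_infix_rigid {e₀ : ℕ} {es : List ℕ} (h₀ : e₀ ≤ 2) (hes : ∀ e ∈ es, e ≤ 2) :
    ¬ [0,0,0] <:+: rigid e₀ es :=
  not_triple_infix_replicate_append_blocks h₀ fun _ hp => hes _ (fst_mem_of_mem_zipIdx hp)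

theorem count_zero_Dword_succ (m j : ℕ) :
    (Dword (m + 1) j).count 0 = if j ≤ m then 2 * m + 1 else 2 * m + 2 := by
  rw [Dword, count_zero_rigid, Nat.add_sub_cancel]
  induction m with
  | zero => simp
  | succ m ih => rw [sum_range_succ, ← add_assoc, ih]; split_ifs <;> omega

theorem not_triple_infix_Dword (n j : ℕ) : ¬ [0,0,0] <:+: Dword n j :=
  not_triple_infix_rigid (by split_ifs <;> omega)
    (by simp only [mem_map]; rintro _ ⟨i, -, rfl⟩; split_ifs <;> omega)

theorem count_Dword_lt {n j : ℕ} (hj : j < n) (c : ℕ) : (Dword n j).count c < 2 * n := by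
  obtain ⟨m, rfl⟩ : ∃ m, n = m + 1 := ⟨n - 1, by omega⟩
  rcases eq_or_ne c 0 with rfl | hc
  · rw [count_zero_Dword_succ, if_pos (by omega)]; omega
  · have : (Dword (m + 1) j).count c ≤ 1 := count_rigid_le_one hc _ _
    omega

theorem stmt11_general (n : ℕ) (j : ℕ) (hj : j < n) :
    ∀ p ∈ (ids0 ∪ {(List.replicate 4 0, List.replicate 3 0),
        (List.replicate 3 0 ++ [1], 1 :: List.replicate 3 0),
        idA (2 * n)} : Set (Word × Word)),
      SatId (FM (Dword n j)) p := by
  have hlinear : ∀ c, c ≠ 0 → (Dword n j).count c ≤ 1 := fun c hc => count_rigid_le_one hc _ _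
  have hcube := not_triple_infix_Dword n j
  rintro p (hp | rfl | rfl | rfl)
  · exact satId_ids0 hlinear p hp
  · exact satId_of_cube_infix hlinear hcube (by decide) (by decide) fun ψ h0 => by simp [subst, h0]
  · exact satId_of_cube_infix hlinear hcube (by decide) (by decide) fun ψ h0 => by simp [subst, h0]
  · exact satId_idA (count_Dword_lt hj)

/-- For every `n ≥ 2` and every word `w ∈ Dₙ`, the factor monoid `M(w)`
satisfies the identities (0) and (Cₙ): `x⁴ ≈ x³`, `x³t ≈ tx³`, and
`x^{2n} t₁⋯t_{2n} ≈ (t₁x)⋯(t_{2n}x)`. -/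
theorem stmt11 (n : ℕ) (hn : 2 ≤ n) (j : ℕ) (hj : j < n) :
    ∀ p ∈ (ids0 ∪ {(List.replicate 4 0, List.replicate 3 0),
        (List.replicate 3 0 ++ [1], 1 :: List.replicate 3 0),
        idA (2 * n)} : Set (Word × Word)),
      SatId (FM (Dword n j)) p :=
  stmt11_general n j hj
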